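/- Let Γ₁ = (V₁,E₁) and Γ₂ = (V₂,E₂) be graphs where V₂ carries the structure of an abelian group G acting on V₁ × V₂ by g·(u,v) = (u, gv). If the strong product Γ₁ ⊠ Γ₂ is chordal and invariant under this G-action (each translation is a graph automorphism), then every connected component of Γ₂ is a complete graph. -/

import Mathlib

open scoped BigOperators

/-- The strong product of two simple graphs. -/
def strongProd {V₁ V₂ : Type*} (Γ₁ : SimpleGraph V₁) (Γ₂ : SimpleGraph V₂) :
    SimpleGraph (V₁ × V₂) where
  Adj a b := (a.1 = b.1 ∧ Γ₂.Adj a.2 b.2) ∨ (Γ₁.Adj a.1 b.1 ∧ a.2 = b.2) ∨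
    (Γ₁.Adj a.1 b.1 ∧ Γ₂.Adj a.2 b.2)
  symm := by
    constructor
    rintro a b (⟨h1, h2⟩ | ⟨h1, h2⟩ | ⟨h1, h2⟩)
    · exact Or.inl ⟨h1.symm, h2.symm⟩
    · exact Or.inr (Or.inl ⟨h1.symm, h2.symm⟩)
    · exact Or.inr (Or.inr ⟨h1.symm, h2.symm⟩)
  loopless := by
    constructor
    rintro a (⟨h1, h2⟩ | ⟨h1, h2⟩ | ⟨h1, h2⟩)
    · exact (Γ₂.ne_of_adj h2) rfl
    · exact (Γ₁.ne_of_adj h1) rfl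
    · exact (Γ₁.ne_of_adj h1) rfl

/-- A graph is chordal if every cycle of length at least four has a chord. -/
def IsChordal {V : Type*} (Γ : SimpleGraph V) : Prop :=
  ∀ ⦃v : V⦄ (w : Γ.Walk v v), w.IsCycle → 4 ≤ w.length →
    ∃ i j : ℕ, i + 2 ≤ j ∧ j < w.length ∧ ¬(i = 0 ∧ j + 1 = w.length) ∧
      Γ.Adj (w.getVert i) (w.getVert j)

namespace ChordalAux
open SimpleGraph Walk

variable {V : Type*} {Γ : SimpleGraph V}

lemma getVert_map {W : Type*} {Γ' : SimpleGraph W} (F : Γ →g Γ') {u v : V}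
    (w : Γ.Walk u v) (i : ℕ) : (w.map F).getVert i = F (w.getVert i) := by
  induction w generalizing i with
  | nil => simp [Walk.getVert]
  | cons h p ih =>
    cases i with
    | zero => simp
    | succ n => simpa using ih n

def chainWalk (Γ : SimpleGraph V) (f : ℕ → V) :
    ∀ (a b : ℕ), (∀ i, a ≤ i → i < a + b → Γ.Adj (f i) (f (i + 1))) → Γ.Walk (f a) (f (a + b))
  | a, 0, _ => Walk.nil.copy rfl (congrArg f (by omega))
  | a, b + 1, h =>
      (Walk.cons (h a le_rfl (by omega))
        (chainWalk Γ f (a + 1) b (fun i hi hib => h i (by omega) (by omega)))).copy rfl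
        (congrArg f (by omega))

lemma chainWalk_length (f : ℕ → V) (a b : ℕ) (h) :
    (chainWalk Γ f a b h).length = b := by
  induction b generalizing a with
  | zero => simp [chainWalk]
  | succ b ih => simp [chainWalk, ih]

lemma chainWalk_getVert (f : ℕ → V) (a b : ℕ) (h) (i : ℕ) (hi : i ≤ b) :
    (chainWalk Γ f a b h).getVert i = f (a + i) := by
  induction b generalizing a i with
  | zero =>
    have : i = 0 := by omega
    subst this
    simp [chainWalk, Walk.getVert]
  | succ b ih =>
    cases i with
    | zero => simp [chainWalk, Walk.getVert]
    | succ n =>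
      have : ((chainWalk Γ f a (b+1) h).getVert (n+1)) =
          (chainWalk Γ f (a+1) b (fun i hi hib => h i (by omega) (by omega))).getVert n := by
        simp [chainWalk]
      rw [this, ih _ _ _ (by omega)]
      congr 1
      omega

lemma chainWalk_support (f : ℕ → V) (a b : ℕ) (h) :
    (chainWalk Γ f a b h).support = (List.range' a (b + 1)).map f := by
  induction b generalizing a with
  | zero => simp [chainWalk]
  | succ b ih =>
    simp only [chainWalk, Walk.support_copy, Walk.support_cons, ih]
    conv_rhs => rw [List.range'_succ]
    simp

lemma end_edge_not_mem {u v : V} {p : Γ.Walk u v} (hp : p.IsPath) (hlen : 2 ≤ p.length) :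
    s(v, u) ∉ p.edges := by
  intro hmem
  cases p with
  | nil => simp at hlen
  | @cons _ x _ h q =>
    rw [Walk.isPath_def, Walk.support_cons, List.nodup_cons] at hp
    obtain ⟨hu, hq⟩ := hp
    rw [Walk.edges_cons, List.mem_cons] at hmem
    rcases hmem with heq | hmem
    · rw [Sym2.eq_iff] at heq
      rcases heq with ⟨hvu, _⟩ | ⟨hvx, _⟩
      · exact hu (hvu ▸ q.end_mem_support)
      · subst hvx
        have : q = Walk.nil := (Walk.isPath_iff_eq_nil (p := q)).mp (by rwa [Walk.isPath_def])
        subst this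
        simp at hlen
    · exact hu (q.snd_mem_support_of_mem_edges hmem)

lemma harvest (hch : IsChordal Γ) (f : ℕ → V) (L : ℕ) (hL : 4 ≤ L)
    (hadj : ∀ i, i < L → Γ.Adj (f i) (f (i + 1))) (hclose : f L = f 0)
    (hinj : ∀ i j, i < L → j < L → f i = f j → i = j) :
    ∃ i j, i + 2 ≤ j ∧ j < L ∧ ¬(i = 0 ∧ j + 1 = L) ∧ Γ.Adj (f i) (f j) := by
  obtain ⟨L', rfl⟩ : ∃ L', L = L' + 1 := ⟨L - 1, by omega⟩
  have hadj' : ∀ i, 1 ≤ i → i < 1 + L' → Γ.Adj (f i) (f (i + 1)) :=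
    fun i h1 h2 => hadj i (by omega)
  set p : Γ.Walk (f 1) (f 0) :=
    (chainWalk Γ f 1 L' hadj').copy rfl ((congrArg f (by omega : 1 + L' = L' + 1)).trans hclose)
    with hp_def
  have hplen : p.length = L' := by
    rw [hp_def, Walk.length_copy, chainWalk_length]
  have hpsupp : p.support = (List.range' 1 (L' + 1)).map f := by
    rw [hp_def, Walk.support_copy, chainWalk_support]
  have hppath : p.IsPath := by
    rw [Walk.isPath_def, hpsupp]
    refine List.Nodup.map_on ?_ (List.nodup_range' (s := 1) (n := L' + 1))
    intro i hi j hj hij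
    rw [List.mem_range'_1] at hi hj
    obtain ⟨hi1, hi2⟩ := hi
    obtain ⟨hj1, hj2⟩ := hj
    rcases Nat.lt_or_ge i (L' + 1) with h | h
    · rcases Nat.lt_or_ge j (L' + 1) with h' | h'
      · exact hinj i j h h' hij
      · have hj0 : f j = f 0 := (congrArg f (by omega)).trans hclose
        rw [hj0] at hij
        have := hinj i 0 h (by omega) hij
        omega
    · have hi0 : f i = f 0 := (congrArg f (by omega)).trans hclose
      rcases Nat.lt_or_ge j (L' + 1) with h' | h'
      · rw [hi0] at hij
        have := hinj 0 j (by omega) h' hij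
        omega
      · omega
  have hcons : Γ.Adj (f 0) (f 1) := hadj 0 (by omega)
  set w : Γ.Walk (f 0) (f 0) := Walk.cons hcons p with hw_def
  have hwcyc : w.IsCycle := by
    rw [hw_def, Walk.cons_isCycle_iff]
    exact ⟨hppath, end_edge_not_mem hppath (by omega)⟩
  have hwlen : w.length = L' + 1 := by
    rw [hw_def, Walk.length_cons, hplen]
  have hgv : ∀ i, i ≤ L' + 1 → w.getVert i = f i := by
    intro i hi
    cases i with
    | zero => simp [hw_def]
    | succ n =>
      rw [hw_def, Walk.getVert_cons_succ]
      by_cases hn : n ≤ L'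
      · rw [hp_def, Walk.getVert_copy, chainWalk_getVert _ _ _ _ _ hn]
        congr 1
        omega
      · omega
  obtain ⟨i, j, h1, h2, h3, h4⟩ := hch w hwcyc (by omega)
  rw [hwlen] at h2 h3
  rw [hgv i (by omega), hgv j (by omega)] at h4
  exact ⟨i, j, h1, h2, h3, h4⟩

lemma four_cycle (hch : IsChordal Γ) {a b c d : V} (hab : Γ.Adj a b) (hbc : Γ.Adj b c)
    (hcd : Γ.Adj c d) (hda : Γ.Adj d a) (hac : ¬Γ.Adj a c) (hac' : a ≠ c) (hbd : b ≠ d) :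
    Γ.Adj b d := by
  set p : Γ.Walk b a := Walk.cons hbc (Walk.cons hcd (Walk.cons hda Walk.nil)) with hp_def
  have hppath : p.IsPath := by
    rw [hp_def, Walk.isPath_def]
    simp [hbc.ne, hbd, hab.ne', hcd.ne, (Ne.symm hac'), hda.ne]
  set w : Γ.Walk a a := Walk.cons hab p with hw_def
  have hwcyc : w.IsCycle := by
    rw [hw_def, Walk.cons_isCycle_iff]
    refine ⟨hppath, ?_⟩
    rw [hp_def]
    simp only [Walk.edges_cons, Walk.edges_nil, List.mem_cons, List.not_mem_nil, or_false]
    push_neg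
    refine ⟨?_, ?_, ?_⟩
    · intro hh
      rw [Sym2.eq_iff] at hh
      rcases hh with ⟨rfl, rfl⟩ | ⟨rfl, -⟩
      · exact hac' rfl
      · exact hac' rfl
    · intro hh
      rw [Sym2.eq_iff] at hh
      rcases hh with ⟨rfl, -⟩ | ⟨rfl, rfl⟩
      · exact hac' rfl
      · exact hda.ne' rfl
    · intro hh
      rw [Sym2.eq_iff] at hh
      rcases hh with ⟨rfl, rfl⟩ | ⟨-, rfl⟩
      · exact hda.ne' rfl
      · exact hbd rfl
  have hwlen : w.length = 4 := rfl
  obtain ⟨i, j, h1, h2, h3, h4⟩ := hch w hwcyc (by omega)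
  rw [hwlen] at h2 h3
  have hij : (i = 0 ∧ j = 2) ∨ (i = 1 ∧ j = 3) := by omega
  rcases hij with ⟨rfl, rfl⟩ | ⟨rfl, rfl⟩
  · exact absurd h4 hac
  · exact h4

end ChordalAux

set_option linter.unusedSectionVars false

section GroupPart
open SimpleGraph

variable {G : Type*} [CommGroup G] [Fintype G] {Γ : SimpleGraph G}

lemma adj_iff (htr : ∀ (g x y : G), Γ.Adj x y ↔ Γ.Adj (g * x) (g * y)) (a b : G) :
    Γ.Adj a b ↔ Γ.Adj 1 (a⁻¹ * b) := by
  have := htr a⁻¹ a b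
  rwa [inv_mul_cancel] at this

lemma sym_inv (htr : ∀ (g x y : G), Γ.Adj x y ↔ Γ.Adj (g * x) (g * y)) {x : G}
    (h : Γ.Adj 1 x) : Γ.Adj 1 x⁻¹ := by
  have := (adj_iff htr x 1).mp h.symm
  simpa using this

lemma pow_inv_mul (u : G) (a b : ℕ) : (u ^ (a + b))⁻¹ * u ^ a = (u ^ b)⁻¹ := by
  rw [pow_add, mul_inv_rev, mul_assoc, inv_mul_cancel, mul_one]

lemma key_chord (htr : ∀ (g x y : G), Γ.Adj x y ↔ Γ.Adj (g * x) (g * y)) {u : G} {i j : ℕ}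
    (hij : i ≤ j) (h : Γ.Adj (u ^ i) (u ^ j)) : Γ.Adj 1 (u ^ (j - i)) := by
  rw [adj_iff htr] at h
  have e3 : (u ^ i)⁻¹ * u ^ j = u ^ (j - i) := by
    have : u ^ j = u ^ i * u ^ (j - i) := by
      rw [← pow_add]
      congr 1
      omega
    rw [this, inv_mul_cancel_left]
  rwa [e3] at h

lemma double (hch : IsChordal Γ) (htr : ∀ (g x y : G), Γ.Adj x y ↔ Γ.Adj (g * x) (g * y))
    {g : G} (hg : Γ.Adj 1 g) : Γ.Adj 1 (g ^ 2) ∨ g ^ 2 = 1 := by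
  classical
  by_cases h2 : g ^ 2 = 1
  · exact Or.inr h2
  refine Or.inl ?_
  set m := orderOf g with hm
  have hg1 : g ≠ 1 := hg.ne'
  have hmpos : 0 < m := orderOf_pos g
  have hm1 : m ≠ 1 := fun h => hg1 (orderOf_eq_one_iff.mp (hm ▸ h))
  have hpm : g ^ m = 1 := by rw [hm]; exact pow_orderOf_eq_one g
  have hm2 : m ≠ 2 := by
    intro h
    rw [h] at hpm
    exact h2 hpm
  by_cases hmeq : m = 3
  · have h3 : g ^ 3 = 1 := by rw [← hmeq]; exact hpm
    have hmul : g ^ 2 * g = 1 := by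
      rw [← pow_succ]
      exact h3
    rw [mul_eq_one_iff_eq_inv.mp hmul]
    exact sym_inv htr hg
  have hm4 : 4 ≤ m := by omega
  have hstep : ∀ i : ℕ, Γ.Adj (g ^ i) (g ^ (i + 1)) := by
    intro i
    rw [adj_iff htr]
    have : (g ^ i)⁻¹ * g ^ (i + 1) = g := by
      rw [pow_succ, inv_mul_cancel_left]
    rwa [this]
  have hglast : Γ.Adj 1 (g ^ (m - 1)) := by
    have : g ^ (m - 1) = g⁻¹ := by
      apply mul_eq_one_iff_eq_inv.mp
      rw [← pow_succ, show m - 1 + 1 = m by omega]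
      exact hpm
    rw [this]
    exact sym_inv htr hg
  have hinjpow : ∀ i j : ℕ, i < m → j < m → g ^ i = g ^ j → i = j := by
    intro i j hi hj he
    exact pow_injOn_Iio_orderOf (Set.mem_Iio.mpr (hm ▸ hi)) (Set.mem_Iio.mpr (hm ▸ hj)) he
  have hex : ∃ e, 2 ≤ e ∧ e ≤ m - 2 ∧ Γ.Adj 1 (g ^ e) := by
    obtain ⟨i, j, h1, h2, h3, h4⟩ := ChordalAux.harvest hch (fun i => g ^ (i % m)) m (by omega)
      (by
        intro i hi
        by_cases him : i + 1 = m
        · rw [Nat.mod_eq_of_lt (by omega), him, Nat.mod_self, pow_zero]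
          have : i = m - 1 := by omega
          rw [this]
          exact hglast.symm
        · rw [Nat.mod_eq_of_lt (by omega), Nat.mod_eq_of_lt (by omega)]
          exact hstep i)
      (by simp only [Nat.mod_self, Nat.zero_mod])
      (by
        intro i j hi hj he
        simp only [Nat.mod_eq_of_lt hi, Nat.mod_eq_of_lt hj] at he
        exact hinjpow i j hi hj he)
    simp only [Nat.mod_eq_of_lt (show i < m by omega), Nat.mod_eq_of_lt (show j < m by omega)] at h4
    refine ⟨j - i, by omega, by omega, key_chord htr (by omega) h4⟩
  set d := Nat.find hex with hd
  obtain ⟨hd2, hdm, hdadj⟩ := Nat.find_spec hex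
  rw [← hd] at hd2 hdm hdadj
  by_cases hde : d = 2
  · rw [← hde]
    exact hdadj
  have hd3 : 3 ≤ d := by omega
  exfalso
  obtain ⟨i, j, h1, h2, h3, h4⟩ := ChordalAux.harvest hch (fun i => g ^ (i % (d + 1))) (d + 1)
    (by omega)
    (by
      intro i hi
      by_cases him : i + 1 = d + 1
      · rw [Nat.mod_eq_of_lt (by omega), him, Nat.mod_self, pow_zero]
        have : i = d := by omega
        rw [this]
        exact hdadj.symm
      · rw [Nat.mod_eq_of_lt (by omega), Nat.mod_eq_of_lt (by omega)]
        exact hstep i)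
    (by simp only [Nat.mod_self, Nat.zero_mod])
    (by
      intro i j hi hj he
      simp only [Nat.mod_eq_of_lt hi, Nat.mod_eq_of_lt hj] at he
      exact hinjpow i j (by omega) (by omega) he)
  simp only [Nat.mod_eq_of_lt (show i < d + 1 by omega),
    Nat.mod_eq_of_lt (show j < d + 1 by omega)] at h4
  have hchord := key_chord htr (show i ≤ j by omega) h4
  have hP : 2 ≤ j - i ∧ j - i ≤ m - 2 ∧ Γ.Adj 1 (g ^ (j - i)) :=
    ⟨by omega, by omega, hchord⟩
  exact Nat.find_min hex (show j - i < Nat.find hex by rw [← hd]; omega) hP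

lemma powmem (hch : IsChordal Γ) (htr : ∀ (g x y : G), Γ.Adj x y ↔ Γ.Adj (g * x) (g * y))
    {u : G} (hu : Γ.Adj 1 u) : ∀ k, Γ.Adj 1 (u ^ k) ∨ u ^ k = 1 := by
  classical
  by_contra hcon
  push_neg at hcon
  obtain ⟨k0, hk1, hk2⟩ := hcon
  have hex : ∃ k, ¬Γ.Adj 1 (u ^ k) ∧ u ^ k ≠ 1 := ⟨k0, hk1, hk2⟩
  set K := Nat.find hex with hKdef
  obtain ⟨hKadj, hKne⟩ := Nat.find_spec hex
  rw [← hKdef] at hKadj hKne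
  have hmin : ∀ n, n < K → Γ.Adj 1 (u ^ n) ∨ u ^ n = 1 := by
    intro n hn
    by_contra hc
    push_neg at hc
    rw [hKdef] at hn
    exact Nat.find_min hex hn ⟨hc.1, hc.2⟩
  have hK0 : K ≠ 0 := fun h0 => hKne (by rw [h0, pow_zero])
  have hK1 : K ≠ 1 := fun h0 => hKadj (by rw [h0, pow_one]; exact hu)
  have hK2 : 2 ≤ K := by omega
  have hSpow : ∀ j, 1 ≤ j → j < K → Γ.Adj 1 (u ^ j) := by
    intro j h1 hj
    rcases hmin j hj with h | h
    · exact h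
    · exfalso
      have e1 : u ^ K = u ^ (K % j) := by
        calc u ^ K = u ^ (j * (K / j) + K % j) := by rw [Nat.div_add_mod]
          _ = (u ^ j) ^ (K / j) * u ^ (K % j) := by rw [pow_add, pow_mul]
          _ = u ^ (K % j) := by rw [h, one_pow, one_mul]
      have hlt : K % j < K := by
        have := Nat.mod_lt K (show 0 < j by omega)
        omega
      rcases hmin (K % j) hlt with h' | h'
      · exact hKadj (e1 ▸ h')
      · exact hKne (e1 ▸ h')
  have hgap : ∀ j, 1 ≤ j → j < K → ¬Γ.Adj 1 (u ^ (K + j)) := by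
    intro j h1 hj hadJ
    have e2 : Γ.Adj (u ^ (K + j)) (u ^ K) := by
      rw [adj_iff htr]
      have : (u ^ (K + j))⁻¹ * u ^ K = (u ^ j)⁻¹ := pow_inv_mul u K j
      rw [this]
      exact sym_inv htr (hSpow j h1 hj)
    have e3 : Γ.Adj (u ^ K) (u ^ j) := by
      rw [adj_iff htr]
      have e := pow_inv_mul u j (K - j)
      rw [show j + (K - j) = K by omega] at e
      rw [e]
      exact sym_inv htr (hSpow (K - j) (by omega) (by omega))
    have e4 : Γ.Adj (u ^ j) 1 := (hSpow j h1 hj).symm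
    have hbd : u ^ (K + j) ≠ u ^ j := by
      intro h
      apply hKne
      have : u ^ K * u ^ j = 1 * u ^ j := by
        rw [← pow_add, one_mul, h]
      exact mul_right_cancel this
    have hres := ChordalAux.four_cycle hch hadJ e2 e3 e4 hKadj (Ne.symm hKne) hbd
    rw [adj_iff htr] at hres
    have e := pow_inv_mul u j K
    rw [show j + K = K + j by omega] at e
    rw [e] at hres
    have := sym_inv htr hres
    rw [inv_inv] at this
    exact hKadj this
  have hKm1 : Γ.Adj 1 (u ^ (K - 1)) := hSpow (K - 1) (by omega) (by omega)
  rcases double hch htr hKm1 with hdd | hdd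
  · rw [← pow_mul] at hdd
    by_cases hKe : K = 2
    · rw [show (K - 1) * 2 = K by omega] at hdd
      exact hKadj hdd
    · rw [show (K - 1) * 2 = K + (K - 2) by omega] at hdd
      exact hgap (K - 2) (by omega) (by omega) hdd
  · rw [← pow_mul] at hdd
    by_cases hKe : K = 2
    · rw [show (K - 1) * 2 = K by omega] at hdd
      exact hKne hdd
    · have h0 : u ^ K * u ^ (K - 2) = 1 := by
        rw [← pow_add, show K + (K - 2) = (K - 1) * 2 by omega]
        exact hdd
      have hx := sym_inv htr (hSpow (K - 2) (by omega) (by omega))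
      rw [← mul_eq_one_iff_eq_inv.mp h0] at hx
      exact hKadj hx

lemma mul_closure (hch : IsChordal Γ) (htr : ∀ (g x y : G), Γ.Adj x y ↔ Γ.Adj (g * x) (g * y))
    {a b : G} (ha : Γ.Adj 1 a) (hb : Γ.Adj 1 b) : a * b = 1 ∨ Γ.Adj 1 (a * b) := by
  by_contra hcon
  push_neg at hcon
  obtain ⟨hne, hnadj⟩ := hcon
  by_cases hcyc : ∃ k : ℕ, b = a ^ k
  · obtain ⟨k, rfl⟩ := hcyc
    rcases powmem hch htr ha (k + 1) with h | h
    · exact hnadj (by rwa [pow_succ'] at h)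
    · exact hne (by rwa [pow_succ'] at h)
  · push_neg at hcyc
    have hchain : ∀ n : ℕ, Γ.Adj 1 ((a ^ n)⁻¹ * b) := by
      intro n
      induction n with
      | zero => simpa using hb
      | succ n ih =>
        rcases powmem hch htr ha (n + 1) with hA | hA
        · have e2 : Γ.Adj (a ^ (n + 1)) (a * b) := by
            rw [adj_iff htr]
            have : (a ^ (n + 1))⁻¹ * (a * b) = (a ^ n)⁻¹ * b := by
              rw [pow_succ', mul_inv_rev, mul_assoc, inv_mul_cancel_left]
            rwa [this]
          have e3 : Γ.Adj (a * b) b := by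
            rw [adj_iff htr]
            have : (a * b)⁻¹ * b = a⁻¹ := by
              rw [mul_inv_rev, mul_comm b⁻¹ a⁻¹, mul_assoc, inv_mul_cancel, mul_one]
            rw [this]
            exact sym_inv htr ha
          have hbd : a ^ (n + 1) ≠ b := fun h => hcyc (n + 1) h.symm
          have hres := ChordalAux.four_cycle hch hA e2 e3 hb.symm hnadj (Ne.symm hne) hbd
          rwa [adj_iff htr] at hres
        · exfalso
          rw [pow_succ'] at hA
          rw [inv_eq_of_mul_eq_one_left hA] at ih
          exact hnadj ih
    have hN : a ^ orderOf a = 1 := pow_orderOf_eq_one a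
    have hNpos : 0 < orderOf a := orderOf_pos a
    have h1 : (a ^ (orderOf a - 1))⁻¹ = a := by
      apply inv_eq_of_mul_eq_one_left
      rw [← pow_succ', show orderOf a - 1 + 1 = orderOf a by omega]
      exact hN
    have := hchain (orderOf a - 1)
    rw [h1] at this
    exact hnadj this

end GroupPart

/-- If the strong product `Γ₁ ⊠ Γ₂` is chordal and invariant under the action of the
abelian group `G` of vertices of `Γ₂` by translation in the second coordinate, then every
connected component of `Γ₂` is complete. -/
theorem chordal_strongProd_group_invariant_components_complete
    {V₁ : Type*} [Fintype V₁] [Nonempty V₁]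
    (G : Type*) [CommGroup G] [Fintype G]
    (Γ₁ : SimpleGraph V₁) (Γ₂ : SimpleGraph G)
    (hchordal : IsChordal (strongProd Γ₁ Γ₂))
    (hinv : ∀ (g : G) (a b : V₁ × G),
      (strongProd Γ₁ Γ₂).Adj a b ↔
        (strongProd Γ₁ Γ₂).Adj (a.1, g * a.2) (b.1, g * b.2)) :
    ∀ v v' : G, Γ₂.Reachable v v' → v ≠ v' → Γ₂.Adj v v' := by
  classical
  obtain ⟨u₀⟩ := (inferInstance : Nonempty V₁)
  have fib : ∀ x y : G, (strongProd Γ₁ Γ₂).Adj (u₀, x) (u₀, y) ↔ Γ₂.Adj x y := by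
    intro x y
    constructor
    · rintro (⟨-, h⟩ | ⟨h, -⟩ | ⟨h, -⟩)
      · exact h
      · exact absurd h (Γ₁.irrefl (v := u₀))
      · exact absurd h (Γ₁.irrefl (v := u₀))
    · intro h
      exact Or.inl ⟨rfl, h⟩
  have htr : ∀ (g x y : G), Γ₂.Adj x y ↔ Γ₂.Adj (g * x) (g * y) := by
    intro g x y
    exact ((fib x y).symm.trans (hinv g (u₀, x) (u₀, y))).trans (fib (g * x) (g * y))
  have hch2 : IsChordal Γ₂ := by
    intro v w hcyc hlen
    let F : Γ₂ →g strongProd Γ₁ Γ₂ :=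
      ⟨fun x => (u₀, x), fun h => Or.inl ⟨rfl, h⟩⟩
    have hFinj : Function.Injective F.toFun := fun a b h => congrArg Prod.snd h
    obtain ⟨i, j, h1, h2, h3, h4⟩ := hchordal (w.map F) (hcyc.map hFinj)
      (by rwa [SimpleGraph.Walk.length_map])
    rw [SimpleGraph.Walk.length_map] at h2 h3
    rw [ChordalAux.getVert_map, ChordalAux.getVert_map] at h4
    exact ⟨i, j, h1, h2, h3, (fib _ _).mp h4⟩
  have htrans : ∀ x y z : G, Γ₂.Adj x y → Γ₂.Adj y z → x ≠ z → Γ₂.Adj x z := by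
    intro x y z hxy hyz hxz
    have h1 : Γ₂.Adj 1 (y⁻¹ * x) := (adj_iff htr y x).mp hxy.symm
    have h2 : Γ₂.Adj 1 (y⁻¹ * z) := (adj_iff htr y z).mp hyz
    have hprod : (y⁻¹ * x)⁻¹ * (y⁻¹ * z) = x⁻¹ * z := by
      rw [mul_inv_rev, inv_inv]
      rw [mul_assoc, mul_inv_cancel_left]
    rcases mul_closure hch2 htr (sym_inv htr h1) h2 with h | h
    · exfalso
      apply hxz
      rw [hprod] at h
      exact inv_mul_eq_one.mp h
    · rw [hprod] at h
      exact (adj_iff htr x z).mpr h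
  have key : ∀ {x y : G}, Γ₂.Walk x y → x ≠ y → Γ₂.Adj x y := by
    intro x y w
    induction w with
    | nil => intro h; exact absurd rfl h
    | @cons a m b h p ih =>
      intro hxy
      by_cases hmy : m = b
      · exact hmy ▸ h
      · exact htrans _ _ _ h (ih hmy) hxy
  intro v v' hr hne
  obtain ⟨w⟩ := hr
  exact key w hne
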